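/- Let k be a field of characteristic p > 0 and let R = k[u_1,...,u_m]. With notation as above (v'_j and g built from products of blocks of variables shifted by constants a_i, and g the product of the remaining variables), let 𝔪 be the maximal ideal of the point (a_1,...,a_m) where additionally a_i = 0 for l_n < i ≤ m. Then for every q = p^e, the element (v'_1 ⋯ v'_n)^(q−1) · g^(q−1) does not lie in the Frobenius power 𝔪^[q] = (x^q : x ∈ 𝔪). -/

import Mathlib

/-!
Translating by `a` turns `𝔪^[q]` into the monomial ideal `(X_i ^ q)` and each factor `v'_j`, `g`
into a polynomial that is monic for the lexicographic order, with leading monomial the product of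
the variables of its block. The blocks are pairwise disjoint, so the element becomes `F ^ (q - 1)`
with `F` monic of squarefree leading monomial; the leading monomial of `F ^ (q - 1)` then has all
exponents at most `q - 1`, so it is a monomial of the element outside `(X_i ^ q)`.
-/

open MvPolynomial

namespace MvPolynomial

variable {σ R : Type*}

theorem mem_span_X_pow_iff [CommSemiring R] {q : ℕ} {f : MvPolynomial σ R} :
    f ∈ Ideal.span (Set.range fun i => (X i : MvPolynomial σ R) ^ q) ↔
      ∀ d ∈ f.support, ∃ i, q ≤ d i := by
  have hrange : Set.range (fun i => (X i : MvPolynomial σ R) ^ q) =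
      (fun s => monomial s (1 : R)) '' Set.range fun i => Finsupp.single i q := by
    rw [← Set.range_comp]
    simp only [Function.comp_def, X_pow_eq_monomial]
  simp [hrange, mem_ideal_span_monomial_image, Finsupp.single_le_iff]

theorem aeval_X_add_C_mem_span_X_pow [CommRing R] {a : σ → R} {q : ℕ} {f : MvPolynomial σ R}
    (hf : f ∈ Ideal.span (Set.range fun i => (X i - C (a i)) ^ q)) :
    aeval (fun i => X i + C (a i)) f ∈
      Ideal.span (Set.range fun i => (X i : MvPolynomial σ R) ^ q) := by
  have hmap := Ideal.mem_map_of_mem (aeval (R := R) fun i => X i + C (a i)) hf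
  rw [Ideal.map_span, ← Set.range_comp] at hmap
  convert hmap using 3
  ext1 i
  simp

end MvPolynomial

theorem Finsupp.sum_single_one_apply {σ : Type*} [DecidableEq σ] (s : Finset σ) (x : σ) :
    (∑ i ∈ s, Finsupp.single i 1) x = if x ∈ s then 1 else 0 := by
  simp [Finsupp.finsetSum_apply, Finsupp.single_apply]

namespace MonomialOrder
variable {σ R : Type*} [CommRing R] (m : MonomialOrder σ)

theorem monic_prod_X_add_C (s : Finset σ) (c : σ → R) :
    m.Monic (∏ i ∈ s, (X i + C (c i))) :=
  Monic.prod fun i _ => m.monic_X_add_C i (c i)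

variable [Nontrivial R]

theorem degree_prod_X_add_C (s : Finset σ) (c : σ → R) :
    m.degree (∏ i ∈ s, (X i + C (c i))) = ∑ i ∈ s, Finsupp.single i 1 := by
  rw [degree_prod_of_regular fun i _ =>
    (m.monic_X_add_C i (c i)).leadingCoeff_eq_one ▸ isRegular_one]
  simp only [degree_X_add_C]

theorem degree_C_lt_degree_prod_X_add_C {s : Finset σ} (hs : s.Nonempty) (c : σ → R) (r : R) :
    m.degree (C r : MvPolynomial σ R) ≺[m] m.degree (∏ i ∈ s, (X i + C (c i))) := by
  classical
  obtain ⟨i, hi⟩ := hs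
  have hne : ∑ i ∈ s, Finsupp.single i 1 ≠ 0 := fun h => by
    simpa [Finsupp.sum_single_one_apply, hi] using DFunLike.congr_fun h i
  rw [degree_C, degree_prod_X_add_C, map_zero]
  exact lt_of_le_of_ne (m.zero_le _) (m.toSyn.map_ne_zero_iff.2 hne).symm

theorem degree_prod_X_add_C_sub_C {s : Finset σ} (hs : s.Nonempty) (c : σ → R) (r : R) :
    m.degree (∏ i ∈ s, (X i + C (c i)) - C r) = ∑ i ∈ s, Finsupp.single i 1 := by
  rw [degree_sub_of_lt (m.degree_C_lt_degree_prod_X_add_C hs c r), degree_prod_X_add_C]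

theorem monic_prod_X_add_C_sub_C {s : Finset σ} (hs : s.Nonempty) (c : σ → R) (r : R) :
    m.Monic (∏ i ∈ s, (X i + C (c i)) - C r) := by
  rw [Monic, leadingCoeff_sub_of_lt (m.degree_C_lt_degree_prod_X_add_C hs c r)]
  exact (m.monic_prod_X_add_C s c).leadingCoeff_eq_one

theorem Monic.pow_pred_notMem_span_X_pow {f : MvPolynomial σ R} (hf : m.Monic f)
    (hdeg : ∀ i, m.degree f i ≤ 1) {q : ℕ} (hq : 0 < q) :
    f ^ (q - 1) ∉ Ideal.span (Set.range fun i => (X i : MvPolynomial σ R) ^ q) := by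
  intro h
  have hdeg_pow : m.degree (f ^ (q - 1)) = (q - 1) • m.degree f :=
    degree_pow_of_pow_leadingCoeff_ne_zero (by simp [hf.leadingCoeff_eq_one])
  obtain ⟨i, hi⟩ := mem_span_X_pow_iff.1 h _ (m.degree_mem_support hf.pow.ne_zero)
  rw [hdeg_pow, Finsupp.smul_apply, smul_eq_mul] at hi
  have := Nat.mul_le_mul_left (q - 1) (hdeg i)
  omega

end MonomialOrder

theorem StrictMono.sum_ite_mem_Ico_add_ite_le_one {n : ℕ} {l : Fin (n + 1) → ℕ}
    (hl : StrictMono l) (x : ℕ) :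
    ∑ j : Fin n, (if l j.castSucc ≤ x ∧ x < l j.succ then 1 else 0) +
      (if l (Fin.last n) ≤ x then 1 else 0) ≤ 1 := by
  by_cases hx : l (Fin.last n) ≤ x
  · have hnot : ∀ j : Fin n, ¬(l j.castSucc ≤ x ∧ x < l j.succ) := fun j _ => by
      have := hl.monotone (Fin.le_last j.succ)
      omega
    simp [hnot, hx]
  · rw [if_neg hx, add_zero, Finset.sum_boole, Nat.cast_id, Finset.card_le_one]
    intro j hj j' hj'
    simp only [Finset.mem_filter, Finset.mem_univ, true_and] at hj hj'
    by_contra hne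
    rcases lt_or_gt_of_ne hne with h | h <;>
      have := hl.monotone (Fin.succ_le_castSucc_iff.2 h) <;> omega

theorem StrictMono.filter_mem_Ico_nonempty {m n : ℕ} {l : Fin (n + 1) → ℕ}
    (hl : StrictMono l) (hlm : l (Fin.last n) ≤ m) (j : Fin n) :
    ({i : Fin m | l j.castSucc ≤ i ∧ i < l j.succ} : Finset (Fin m)).Nonempty := by
  have := hl.monotone (Fin.le_last j.succ)
  have := hl (Fin.castSucc_lt_succ (i := j))
  exact ⟨⟨l j.castSucc, by omega⟩, by simp; omega⟩

theorem stmt_14_general (k : Type) [Field k] (p : ℕ) [Fact p.Prime]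
    (m n : ℕ) (l : Fin (n + 1) → ℕ) (hlmono : StrictMono l)
    (hlm : l (Fin.last n) ≤ m) (a : Fin m → k)
    (v : Fin n → MvPolynomial (Fin m) k)
    (hv : ∀ j : Fin n, v j =
      (∏ i ∈ Finset.univ.filter
          (fun i : Fin m => l j.castSucc ≤ (i : ℕ) ∧ (i : ℕ) < l j.succ), X i) -
        C (∏ i ∈ Finset.univ.filter
          (fun i : Fin m => l j.castSucc ≤ (i : ℕ) ∧ (i : ℕ) < l j.succ), a i))
    (g : MvPolynomial (Fin m) k)
    (hg : g = ∏ i ∈ Finset.univ.filter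
        (fun i : Fin m => l (Fin.last n) ≤ (i : ℕ)), X i)
    (e : ℕ) (q : ℕ) (hq : q = p ^ e) :
    (∏ j : Fin n, v j) ^ (q - 1) * g ^ (q - 1) ∉
      Ideal.span (Set.range (fun i : Fin m => (X i - C (a i)) ^ q)) := by
  classical
  set B : Fin n → Finset (Fin m) := fun j => {i | l j.castSucc ≤ i ∧ i < l j.succ}
  set B' : Finset (Fin m) := {i | l (Fin.last n) ≤ i}
  have hB : ∀ j, (B j).Nonempty := hlmono.filter_mem_Ico_nonempty hlm
  set φ := aeval (R := k) fun i => X i + C (a i)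
  have hφv : ∀ j, φ (v j) = ∏ i ∈ B j, (X i + C (a i)) - C (∏ i ∈ B j, a i) := by
    simp [hv, φ, B]
  have hφg : φ g = ∏ i ∈ B', (X i + C (a i)) := by simp [hg, φ, B']
  let o := MonomialOrder.lex (σ := Fin m)
  have hmonic_v : ∀ j, o.Monic (φ (v j)) := fun j =>
    hφv j ▸ o.monic_prod_X_add_C_sub_C (hB j) a _
  have hmonic_g : o.Monic (φ g) := hφg ▸ o.monic_prod_X_add_C B' a
  have hmonic_prod : o.Monic (∏ j, φ (v j)) := MonomialOrder.Monic.prod fun j _ => hmonic_v j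
  have hdeg : ∀ x, o.degree ((∏ j, φ (v j)) * φ g) x ≤ 1 := fun x => by
    rw [o.degree_mul hmonic_prod.ne_zero hmonic_g.ne_zero,
      o.degree_prod fun j _ => (hmonic_v j).ne_zero]
    simp only [hφv, hφg, o.degree_prod_X_add_C_sub_C (hB _), o.degree_prod_X_add_C]
    rw [Finsupp.add_apply, Finsupp.finsetSum_apply]
    simp only [Finsupp.sum_single_one_apply]
    simpa [B, B'] using hlmono.sum_ite_mem_Ico_add_ite_le_one x
  intro hmem
  have hmem' := aeval_X_add_C_mem_span_X_pow hmem
  rw [map_mul, map_pow, map_pow, map_prod, ← mul_pow] at hmem'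
  exact (hmonic_prod.mul hmonic_g).pow_pred_notMem_span_X_pow o hdeg
    (hq ▸ pow_pos (Fact.out : p.Prime).pos e) hmem'

/-- Let `k` be a field of characteristic `p > 0` and `R = k[u_1,…,u_m]`. With
`0 = l_0 < l_1 < … < l_n ≤ m`, constants `a_i ∈ k` with `a_i = 0` for `i` in the last block
(`l_n ≤ i`), `v'_j = ∏_{block j} u_i − ∏_{block j} a_i` and `g = ∏_{last block} u_i`, let
`𝔪` be the maximal ideal of the point `(a_1,…,a_m)`, generated by the `u_i − a_i`. Then for
every `q = p^e`, the element `(v'_1 ⋯ v'_n)^(q−1) · g^(q−1)` does not lie in the Frobenius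
power `𝔪^[q]`, the ideal generated by the `q`-th powers `(u_i − a_i)^q` of the generators
of `𝔪`. (Variables are re-indexed by `Fin m`.) -/
theorem stmt_14 (k : Type) [Field k] (p : ℕ) [Fact p.Prime] [CharP k p]
    (m n : ℕ) (l : Fin (n + 1) → ℕ) (hl0 : l 0 = 0) (hlmono : StrictMono l)
    (hlm : l (Fin.last n) ≤ m) (a : Fin m → k)
    (ha : ∀ i : Fin m, l (Fin.last n) ≤ (i : ℕ) → a i = 0)
    (v : Fin n → MvPolynomial (Fin m) k)
    (hv : ∀ j : Fin n, v j =
      (∏ i ∈ Finset.univ.filter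
          (fun i : Fin m => l j.castSucc ≤ (i : ℕ) ∧ (i : ℕ) < l j.succ), X i) -
        C (∏ i ∈ Finset.univ.filter
          (fun i : Fin m => l j.castSucc ≤ (i : ℕ) ∧ (i : ℕ) < l j.succ), a i))
    (g : MvPolynomial (Fin m) k)
    (hg : g = ∏ i ∈ Finset.univ.filter
        (fun i : Fin m => l (Fin.last n) ≤ (i : ℕ)), X i)
    (e : ℕ) (q : ℕ) (hq : q = p ^ e) :
    (∏ j : Fin n, v j) ^ (q - 1) * g ^ (q - 1) ∉
      Ideal.span (Set.range (fun i : Fin m => (X i - C (a i)) ^ q)) :=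
  stmt_14_general k p m n l hlmono hlm a v hv g hg e q hq
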